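/- arXiv:0902.1038 — 2 statements merged into one kernel-verified Lean document; each statement's English description precedes it below -/
import Mathlib

section
/- In an optimal (minimum weighted external path length) binary tree for positive weights, every node at depth ℓ has weight at most n/2^{⌊ℓ/2⌋}, where n is the total weight. -/
/-- Binary trees with natural-number weights at the leaves. -/
inductive BTree where
  | leaf : ℕ → BTree
  | node : BTree → BTree → BTree

namespace BTree

/-- Total weight: sum of the leaf weights. -/
def weight : BTree → ℕ
  | leaf w => w
  | node l r => weight l + weight r

/-- Weighted external path length: `∑ (leaf weight)·(leaf depth)`. -/
def cost : BTree → ℕ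
  | leaf _ => 0
  | node l r => cost l + cost r + weight l + weight r

/-- The multiset of leaf weights. -/
def leaves : BTree → Multiset ℕ
  | leaf w => {w}
  | node l r => leaves l + leaves r

/-- `SubtreeAt T d v` means `v` is a node of `T` at depth `d`. -/
inductive SubtreeAt : BTree → ℕ → BTree → Prop
  | refl (t : BTree) : SubtreeAt t 0 t
  | left {l r v : BTree} {d : ℕ} : SubtreeAt l d v → SubtreeAt (node l r) (d + 1) v
  | right {l r v : BTree} {d : ℕ} : SubtreeAt r d v → SubtreeAt (node l r) (d + 1) v

end BTree

/-! Exchanging a node with its uncle changes the cost by the difference of their weights,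
so in an optimal tree every node weighs at most its uncle. A grandparent then weighs at least
twice each of its grandchildren, and the bound follows two levels at a time. -/

namespace BTree

def IsOptimal (T : BTree) : Prop :=
  ∀ T' : BTree, T'.leaves = T.leaves → T.cost ≤ T'.cost

theorem weight_eq_sum_leaves (t : BTree) : t.weight = t.leaves.sum := by
  induction t with
  | leaf w => simp [weight, leaves]
  | node l r ihl ihr => simp [weight, leaves, ihl, ihr]

theorem SubtreeAt.weight_le {T v : BTree} {d : ℕ} (h : SubtreeAt T d v) :
    v.weight ≤ T.weight := by
  induction h with
  | refl => exact le_rfl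
  | left _ ih => exact ih.trans (Nat.le_add_right _ _)
  | right _ ih => exact ih.trans (Nat.le_add_left _ _)

theorem SubtreeAt.exists_split {T v : BTree} {d e : ℕ} (h : SubtreeAt T (d + e) v) :
    ∃ g, SubtreeAt T d g ∧ SubtreeAt g e v := by
  generalize hde : d + e = k at h
  induction h generalizing d with
  | refl t =>
    obtain ⟨rfl, rfl⟩ : d = 0 ∧ e = 0 := by omega
    exact ⟨t, .refl t, .refl t⟩
  | @left l r v k h ih =>
    rcases d with _ | d
    · exact ⟨node l r, .refl _, by simpa [← hde] using h.left⟩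
    · obtain ⟨g, hTg, hgv⟩ := ih (d := d) (by omega)
      exact ⟨g, hTg.left, hgv⟩
  | @right l r v k h ih =>
    rcases d with _ | d
    · exact ⟨node l r, .refl _, by simpa [← hde] using h.right⟩
    · obtain ⟨g, hTg, hgv⟩ := ih (d := d) (by omega)
      exact ⟨g, hTg.right, hgv⟩

/-- The weights of `s` and of its ancestors are unchanged, so only the cost of `s` itself moves. -/
theorem SubtreeAt.exists_replace {T s : BTree} {d : ℕ} (h : SubtreeAt T d s) (s' : BTree)
    (hs' : s'.leaves = s.leaves) :
    ∃ T' : BTree, T'.leaves = T.leaves ∧ T'.cost + s.cost = T.cost + s'.cost := by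
  induction h with
  | refl => exact ⟨s', hs', by omega⟩
  | @left l r _ _ _ ih =>
    obtain ⟨l', hl', hc⟩ := ih hs'
    have hw : l'.weight = l.weight := by rw [weight_eq_sum_leaves, weight_eq_sum_leaves, hl']
    exact ⟨node l' r, by simp [leaves, hl'], by simp only [cost, hw]; omega⟩
  | @right l r _ _ _ ih =>
    obtain ⟨r', hr', hc⟩ := ih hs'
    have hw : r'.weight = r.weight := by rw [weight_eq_sum_leaves, weight_eq_sum_leaves, hr']
    exact ⟨node l r', by simp [leaves, hr'], by simp only [cost, hw]; omega⟩

theorem IsOptimal.of_subtreeAt {T s : BTree} {d : ℕ} (hT : IsOptimal T)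
    (h : SubtreeAt T d s) : IsOptimal s := fun s' hs' => by
  obtain ⟨T', hT', hc⟩ := h.exists_replace s' hs'
  have := hT T' hT'
  omega

theorem IsOptimal.congr {t t' : BTree} (ht : IsOptimal t) (hl : t'.leaves = t.leaves)
    (hc : t'.cost = t.cost) : IsOptimal t' :=
  fun T' hT' => hc ▸ ht T' (hT'.trans hl)

theorem IsOptimal.weight_le_uncle {a b c : BTree} (h : IsOptimal (node (node a b) c)) :
    a.weight ≤ c.weight := by
  have := h (node (node c b) a) (by simp only [leaves]; abel)
  simp only [cost, weight] at this
  omega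

theorem IsOptimal.two_mul_weight_le {g v : BTree} (hg : IsOptimal g) (hv : SubtreeAt g 2 v) :
    2 * v.weight ≤ g.weight := by
  have key (a b c : BTree) (h : IsOptimal (node (node a b) c)) :
      2 * a.weight ≤ a.weight + b.weight + c.weight := by
    have := h.weight_le_uncle
    omega
  match g, v, hv with
  | node (node a b) c, _, .left (.left (.refl _)) =>
    have := key a b c hg
    simp only [weight]; omega
  | node (node a b) c, _, .left (.right (.refl _)) =>
    have := key b a c (hg.congr (by simp only [leaves]; abel) (by simp only [cost, weight]; omega))
    simp only [weight]; omega
  | node c (node a b), _, .right (.left (.refl _)) =>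
    have := key a b c (hg.congr (by simp only [leaves]; abel) (by simp only [cost, weight]; omega))
    simp only [weight]; omega
  | node c (node a b), _, .right (.right (.refl _)) =>
    have := key b a c (hg.congr (by simp only [leaves]; abel) (by simp only [cost, weight]; omega))
    simp only [weight]; omega

theorem IsOptimal.two_pow_mul_weight_le {T v : BTree} {ℓ : ℕ} (hT : IsOptimal T)
    (hv : SubtreeAt T ℓ v) : 2 ^ (ℓ / 2) * v.weight ≤ T.weight := by
  induction ℓ using Nat.twoStepInduction generalizing v with
  | zero => cases hv; simp
  | one => simpa using hv.weight_le
  | more d ih _ =>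
    obtain ⟨g, hTg, hgv⟩ := hv.exists_split (e := 2)
    calc 2 ^ ((d + 2) / 2) * v.weight = 2 ^ (d / 2) * (2 * v.weight) := by
          rw [Nat.add_div_right d two_pos, pow_succ]; ring
      _ ≤ 2 ^ (d / 2) * g.weight := by gcongr; exact (hT.of_subtreeAt hTg).two_mul_weight_le hgv
      _ ≤ T.weight := ih hTg

end BTree

theorem optimal_tree_weight_at_depth_general (T : BTree)
    (hopt : ∀ T' : BTree, T'.leaves = T.leaves → T.cost ≤ T'.cost)
    (v : BTree) (ℓ : ℕ) (hv : BTree.SubtreeAt T ℓ v) :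
    (v.weight : ℝ) ≤ (T.weight : ℝ) / 2 ^ (ℓ / 2) := by
  have h : 2 ^ (ℓ / 2) * v.weight ≤ T.weight := BTree.IsOptimal.two_pow_mul_weight_le hopt hv
  rw [le_div_iff₀ (by positivity), mul_comm]
  exact_mod_cast h

/-- In an optimal (minimum weighted external path length) binary tree on positive
leaf weights summing to `n`, every node at depth `ℓ` has weight at most
`n / 2^⌊ℓ/2⌋`. -/
theorem optimal_tree_weight_at_depth (T : BTree)
    (hpos : ∀ w ∈ T.leaves, 0 < w)
    (hopt : ∀ T' : BTree, T'.leaves = T.leaves → T.cost ≤ T'.cost)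
    (v : BTree) (ℓ : ℕ) (hv : BTree.SubtreeAt T ℓ v) :
    (v.weight : ℝ) ≤ (T.weight : ℝ) / 2 ^ (ℓ / 2) :=
  optimal_tree_weight_at_depth_general T hopt v ℓ hv
end

section
/- The number of down steps of a permutation π equals the number of down steps of the sequence of its strict run heads: if h₁ < h₂ < ⋯ < h_s are the first positions of the strict runs of π, then #{i < n : π(i+1) < π(i)} = #{j < s : π(h_{j+1}) < π(h_j)}. -/
/-!
Between consecutive strict run heads `a < b` the values `π a, π a + 1, …, π (b - 1)` are
consecutive integers, and `π b` lies outside them by injectivity; hence `π b < π (b - 1)` iff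
`π b < π a`. Since every down step ends at a head, `h` maps the descents of the head sequence
bijectively onto the down steps of `π`.
-/

open Finset Function

variable {n : ℕ}

/-- A descent `(k, k + 1)` of `f` is recorded by its right end `k + 1`. -/
def descentSet {α : Type*} [LT α] [DecidableLT α] (f : Fin n → α) : Finset (Fin n) :=
  {i | ∃ k : Fin n, k.val + 1 = i.val ∧ f i < f k}

theorem card_filter_succ_lt_eq_card_descentSet {α : Type*} [LT α] [DecidableLT α]
    (hn : 0 < n) (f : Fin n → α) :
    #{i : Fin (n - 1) | f (Fin.cast (Nat.succ_pred_eq_of_pos hn) i.succ) <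
        f (Fin.cast (Nat.succ_pred_eq_of_pos hn) i.castSucc)} = #(descentSet f) := by
  apply card_nbij (fun i => Fin.cast (Nat.succ_pred_eq_of_pos hn) i.succ)
  · intro i hi
    simp only [descentSet, coe_filter, mem_univ, true_and, Set.mem_ofPred_eq] at hi ⊢
    exact ⟨_, by simp, hi⟩
  · intro i _ j _ hij
    simpa using hij
  · intro i hi
    obtain ⟨k, hk, hlt⟩ := by simpa [descentSet] using hi
    have hkn : k.val < n - 1 := by have := i.isLt; omega
    have hi' : Fin.cast (Nat.succ_pred_eq_of_pos hn) (Fin.succ ⟨k, hkn⟩) = i :=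
      Fin.ext (by simp [← hk])
    refine ⟨⟨k, hkn⟩, ?_, hi'⟩
    simp only [coe_filter, mem_univ, true_and, Set.mem_ofPred_eq, hi']
    convert hlt using 2
    exact Fin.ext (by simp)

def IsRunHead (f : Fin n → ℕ) (i : Fin n) : Prop :=
  ∀ k : Fin n, k.val + 1 = i.val → f i ≠ f k + 1

theorem IsRunHead.val_eq_zero_or {f : Fin n → ℕ} {i : Fin n} (hi : IsRunHead f i) :
    (i : ℕ) = 0 ∨ ∃ (k : ℕ) (hk : k + 1 < n), (i : ℕ) = k + 1 ∧
      f i ≠ f ⟨k, Nat.lt_of_succ_lt hk⟩ + 1 := by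
  rcases Nat.eq_zero_or_pos i with hi0 | hi0
  · exact .inl hi0
  · exact .inr ⟨i - 1, by omega, by omega, hi _ (by simp only; omega)⟩

def IsRun (f : Fin n → ℕ) (a c : Fin n) : Prop :=
  ∀ k k' : Fin n, a ≤ k → k.val + 1 = k'.val → k' ≤ c → f k' = f k + 1

namespace IsRun

variable {f : Fin n → ℕ} {a c : Fin n}

theorem apply_eq_add (hrun : IsRun f a c) (d : ℕ) (k : Fin n) (hk : k.val = a.val + d)
    (hkc : k ≤ c) : f k = f a + d := by
  induction d generalizing k with
  | zero => simp [Fin.ext hk]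
  | succ d ih =>
    let k₀ : Fin n := ⟨a + d, by omega⟩
    have hk₀ : k₀ < k := Fin.lt_def.2 (by simp only [k₀]; omega)
    rw [hrun k₀ k (Fin.le_def.2 (by simp [k₀])) (by simp only [k₀]; omega) hkc,
      ih k₀ rfl (hk₀.le.trans hkc)]
    ring

theorem lt_last_iff (hf : Injective f) (hrun : IsRun f a c) (hac : a ≤ c) {b : Fin n}
    (hb : c.val + 1 = b.val) : f b < f c ↔ f b < f a := by
  rw [Fin.le_def] at hac
  have hc : f c = f a + (c - a) := hrun.apply_eq_add _ c (by omega) le_rfl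
  refine ⟨fun hbc => ?_, fun hba => by omega⟩
  by_contra! hab
  let k : Fin n := ⟨a + (f b - f a), by omega⟩
  have hkb : f k = f b := by
    rw [hrun.apply_eq_add (f b - f a) k rfl (Fin.le_def.2 (by simp only [k]; omega))]
    omega
  have : a.val + (f b - f a) = b.val := congrArg Fin.val (hf hkb)
  omega

end IsRun

section Heads

variable {s : ℕ} {f : Fin n → ℕ} {h : Fin s → Fin n}

theorem isRun_of_succ_eq (hmono : StrictMono h)
    (hcover : ∀ i, IsRunHead f i → i ∈ Set.range h) {j j' : Fin s} (hj : j.val + 1 = j'.val)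
    {c : Fin n} (hc : c.val + 1 = (h j').val) : IsRun f (h j) c := by
  intro k k' hk hkk' hk'c
  have hk' : k' ∉ Set.range h := by
    rintro ⟨m, rfl⟩
    have h1 : j < m := hmono.lt_iff_lt.1 (hk.trans_lt (Fin.lt_def.2 (by omega)))
    have h2 : m < j' := hmono.lt_iff_lt.1 (Fin.lt_def.2 (by rw [Fin.le_def] at hk'c; omega))
    rw [Fin.lt_def] at h1 h2
    omega
  obtain ⟨k₀, hk₀, hf⟩ : ∃ k₀ : Fin n, k₀.val + 1 = k'.val ∧ f k' = f k₀ + 1 := by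
    simpa [IsRunHead] using mt (hcover k') hk'
  rwa [Fin.ext (by omega : k₀.val = k.val)] at hf

theorem lt_iff_lt_of_succ_eq (hf : Injective f) (hmono : StrictMono h)
    (hcover : ∀ i, IsRunHead f i → i ∈ Set.range h) {j j' : Fin s} (hj : j.val + 1 = j'.val)
    {c : Fin n} (hc : c.val + 1 = (h j').val) : f (h j') < f c ↔ f (h j') < f (h j) := by
  have hjj' : (h j).val < (h j').val := Fin.lt_def.1 (hmono (Fin.lt_def.2 (by omega)))
  exact (isRun_of_succ_eq hmono hcover hj hc).lt_last_iff hf (Fin.le_def.2 (by omega)) hc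

theorem val_apply_eq_zero (hmono : StrictMono h)
    (hcover : ∀ i, IsRunHead f i → i ∈ Set.range h) {j : Fin s} (hj : j.val = 0) :
    (h j).val = 0 := by
  obtain ⟨m, hm⟩ := hcover ⟨0, (h j).pos⟩ fun k hk => by simp at hk
  have := hmono.monotone (Fin.le_def.2 (by omega : j.val ≤ m.val))
  rw [hm, Fin.le_def] at this
  exact Nat.le_zero.1 this

theorem descentSet_eq_map_descentSet_comp (hf : Injective f) (hmono : StrictMono h)
    (hcover : ∀ i, IsRunHead f i → i ∈ Set.range h) :
    descentSet f = (descentSet (f ∘ h)).map ⟨h, hmono.injective⟩ := by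
  ext i
  simp only [descentSet, mem_map, mem_filter, mem_univ, true_and, Embedding.coeFn_mk,
    comp_apply]
  constructor
  · rintro ⟨c, hc, hdesc⟩
    obtain ⟨j', rfl⟩ := hcover i fun k hk => by
      rw [Fin.ext (by omega : k.val = c.val)]
      omega
    have hj' : j'.val ≠ 0 := fun hj' => by
      have := val_apply_eq_zero hmono hcover hj'
      omega
    refine ⟨j', ⟨⟨j' - 1, by omega⟩, by simp only; omega, ?_⟩, rfl⟩
    exact (lt_iff_lt_of_succ_eq hf hmono hcover (by simp only; omega) hc).1 hdesc
  · rintro ⟨j', ⟨j, hj, hdesc⟩, rfl⟩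
    have hjj' : (h j).val < (h j').val := Fin.lt_def.1 (hmono (Fin.lt_def.2 (by omega)))
    refine ⟨⟨(h j').val - 1, by omega⟩, by simp only; omega, ?_⟩
    exact (lt_iff_lt_of_succ_eq hf hmono hcover hj (by simp only; omega)).2 hdesc

end Heads

/-- The number of down steps of a permutation equals the number of descents in
the sequence of values at its strict run heads (where a head is position `0` or
any position whose value is not one plus the previous value). -/
theorem downsteps_eq_descents_of_strict_run_heads (n s : ℕ) (hn : 0 < n)
    (hs : 0 < s) (π : Equiv.Perm (Fin n)) (h : Fin s → Fin n)
    (hmono : StrictMono h)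
    (hheads : ∀ i : Fin n, (∃ j, h j = i) ↔
      ((i : ℕ) = 0 ∨ ∃ (k : ℕ) (hk : k + 1 < n), (i : ℕ) = k + 1 ∧
        (π i : ℕ) ≠ (π ⟨k, Nat.lt_of_succ_lt hk⟩ : ℕ) + 1)) :
    (Finset.univ.filter fun i : Fin (n - 1) =>
        π (Fin.cast (Nat.succ_pred_eq_of_pos hn) i.succ) <
          π (Fin.cast (Nat.succ_pred_eq_of_pos hn) i.castSucc)).card =
    (Finset.univ.filter fun j : Fin (s - 1) =>
        π (h (Fin.cast (Nat.succ_pred_eq_of_pos hs) j.succ)) <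
          π (h (Fin.cast (Nat.succ_pred_eq_of_pos hs) j.castSucc))).card := by
  let v : Fin n → ℕ := fun i => π i
  have hv : Injective v := Fin.val_injective.comp π.injective
  have hcover : ∀ i, IsRunHead v i → i ∈ Set.range h := fun i hi =>
    (hheads i).2 hi.val_eq_zero_or
  calc _ = #(descentSet v) := card_filter_succ_lt_eq_card_descentSet hn v
    _ = #(descentSet (v ∘ h)) := by
      rw [descentSet_eq_map_descentSet_comp hv hmono hcover, card_map]
    _ = _ := (card_filter_succ_lt_eq_card_descentSet hs (v ∘ h)).symm
end
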